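/- Let A be an n×n nonnegative real matrix with symmetric sign pattern, i.e. for all i, j: A_{ij} = 0 if and only if A_{ji} = 0. Then A is two-fold irreducible (both A and AᵀA are irreducible) if and only if A is primitive. -/

import Mathlib

open Matrix

/-- A nonnegative matrix is irreducible if for every pair (i,j) some power has a
positive (i,j) entry. -/
def MatIrred {n : ℕ} (A : Matrix (Fin n) (Fin n) ℝ) : Prop :=
  ∀ i j : Fin n, ∃ m : ℕ, 0 < m ∧ 0 < (A ^ m) i j

/-- A nonnegative matrix is primitive if some power has all entries positive. -/
def MatPrimitive {n : ℕ} (A : Matrix (Fin n) (Fin n) ℝ) : Prop :=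
  ∃ m : ℕ, 0 < m ∧ ∀ i j : Fin n, 0 < (A ^ m) i j

/-!
For a nonnegative matrix only the positivity pattern of its powers matters. When the pattern of
`A` is symmetric, `(Aᵀ * A) i j = ∑ₖ A k i * A k j` and `(A * A) i j = ∑ₖ A i k * A k j` have the
same pattern, so `Aᵀ * A` is irreducible iff `A * A` is. Irreducibility of `A * A` forces every
row of `A` to have a positive entry `A i k`, and then `A i k * A k i > 0` makes the diagonal of
`A * A` positive. An irreducible matrix with positive diagonal is primitive, since a positive
entry of `B ^ m` stays positive in all higher powers; and `A * A` is primitive iff `A` is.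
-/

namespace Matrix

variable {ι R : Type*} [Fintype ι] [Semiring R] [LinearOrder R] [IsStrictOrderedRing R]

theorem mul_apply_pos_iff {B C : Matrix ι ι R} (hB : ∀ i j, 0 ≤ B i j) (hC : ∀ i j, 0 ≤ C i j)
    (i j : ι) : 0 < (B * C) i j ↔ ∃ k, 0 < B i k ∧ 0 < C k j := by
  rw [mul_apply, Finset.sum_pos_iff_of_nonneg fun k _ ↦ mul_nonneg (hB i k) (hC k j)]
  refine exists_congr fun k ↦ ⟨fun ⟨_, h⟩ ↦ ?_, fun h ↦ ⟨Finset.mem_univ k, mul_pos h.1 h.2⟩⟩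
  exact (pos_and_pos_or_neg_and_neg_of_mul_pos h).resolve_right fun h' ↦ h'.1.not_ge (hB i k)

theorem mul_apply_nonneg {B C : Matrix ι ι R} (hB : ∀ i j, 0 ≤ B i j) (hC : ∀ i j, 0 ≤ C i j)
    (i j : ι) : 0 ≤ (B * C) i j :=
  Finset.sum_nonneg fun k _ ↦ mul_nonneg (hB i k) (hC k j)

theorem mul_self_apply_pos_of_forall_pos {B : Matrix ι ι R} (hB : ∀ i j, 0 < B i j) (i j : ι) :
    0 < (B * B) i j :=
  (mul_apply_pos_iff (fun i j ↦ (hB i j).le) (fun i j ↦ (hB i j).le) i j).2 ⟨i, hB i i, hB i j⟩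

theorem transpose_mul_self_apply_pos_iff {A : Matrix ι ι R} (hA : ∀ i j, 0 ≤ A i j)
    (hpat : ∀ i j, 0 < A i j ↔ 0 < A j i) (i j : ι) :
    0 < (Aᵀ * A) i j ↔ 0 < (A * A) i j := by
  rw [mul_apply_pos_iff (B := Aᵀ) (fun i j ↦ hA j i) hA, mul_apply_pos_iff hA hA]
  exact exists_congr fun k ↦ and_congr_left' (hpat k i)

theorem mul_self_apply_self_pos {A : Matrix ι ι R} (hA : ∀ i j, 0 ≤ A i j)
    (hpat : ∀ i j, 0 < A i j ↔ 0 < A j i) {i k : ι} (hik : 0 < A i k) : 0 < (A * A) i i :=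
  (mul_apply_pos_iff hA hA i i).2 ⟨k, hik, (hpat i k).1 hik⟩

variable [DecidableEq ι]

theorem pow_apply_pos_iff_of_apply_pos_iff {B C : Matrix ι ι R}
    (hB : ∀ i j, 0 ≤ B i j) (hC : ∀ i j, 0 ≤ C i j) (hBC : ∀ i j, 0 < B i j ↔ 0 < C i j)
    (m : ℕ) (i j : ι) : 0 < (B ^ m) i j ↔ 0 < (C ^ m) i j := by
  induction m generalizing j with
  | zero => rfl
  | succ m ih =>
    rw [pow_succ, pow_succ, mul_apply_pos_iff (pow_apply_nonneg hB m) hB,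
      mul_apply_pos_iff (pow_apply_nonneg hC m) hC]
    exact exists_congr fun k ↦ and_congr (ih k) (hBC k j)

theorem exists_apply_pos_of_pow_apply_pos {B : Matrix ι ι R} (hB : ∀ i j, 0 ≤ B i j)
    {m : ℕ} (hm : 0 < m) {i j : ι} (h : 0 < (B ^ m) i j) : ∃ k, 0 < B i k := by
  obtain ⟨m, rfl⟩ := Nat.exists_eq_add_one_of_ne_zero hm.ne'
  rw [pow_succ', mul_apply_pos_iff hB (pow_apply_nonneg hB m)] at h
  obtain ⟨k, hk, -⟩ := h
  exact ⟨k, hk⟩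

theorem pow_apply_pos_of_le {B : Matrix ι ι R} (hB : ∀ i j, 0 ≤ B i j) (hdiag : ∀ i, 0 < B i i)
    {i j : ι} {m m' : ℕ} (hmm' : m ≤ m') (h : 0 < (B ^ m) i j) : 0 < (B ^ m') i j := by
  induction m', hmm' using Nat.le_induction with
  | base => exact h
  | succ m' _ ih =>
    rw [pow_succ, mul_apply_pos_iff (pow_apply_nonneg hB m') hB]
    exact ⟨j, ih, hdiag j⟩

end Matrix

section FinMatrix

variable {n : ℕ} {A B : Matrix (Fin n) (Fin n) ℝ}

theorem MatPrimitive.matIrred (h : MatPrimitive A) : MatIrred A :=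
  fun i j ↦ h.imp fun _ ⟨hm, hpos⟩ ↦ ⟨hm, hpos i j⟩

theorem matPrimitive_mul_self_iff : MatPrimitive (A * A) ↔ MatPrimitive A := by
  have hsq (m : ℕ) : (A * A) ^ m = A ^ (2 * m) := by rw [pow_mul, sq]
  constructor
  · rintro ⟨m, hm, hpos⟩
    exact ⟨2 * m, by positivity, by simpa only [hsq] using hpos⟩
  · rintro ⟨m, hm, hpos⟩
    refine ⟨m, hm, fun i j ↦ ?_⟩
    rw [hsq, mul_comm, pow_mul, sq]
    exact mul_self_apply_pos_of_forall_pos hpos i j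

theorem matPrimitive_of_matIrred_of_diag_pos (hB : ∀ i j, 0 ≤ B i j) (hdiag : ∀ i, 0 < B i i)
    (hirr : MatIrred B) : MatPrimitive B := by
  choose m hm hpos using hirr
  obtain ⟨M, hM⟩ := Finite.exists_le fun p : Fin n × Fin n ↦ m p.1 p.2
  exact ⟨M + 1, M.succ_pos, fun i j ↦
    pow_apply_pos_of_le hB hdiag ((hM (i, j)).trans M.le_succ) (hpos i j)⟩

theorem matIrred_transpose_mul_self_iff (hA : ∀ i j, 0 ≤ A i j)
    (hpat : ∀ i j, 0 < A i j ↔ 0 < A j i) : MatIrred (Aᵀ * A) ↔ MatIrred (A * A) := by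
  have hpow := pow_apply_pos_iff_of_apply_pos_iff (mul_apply_nonneg (B := Aᵀ) (fun i j ↦ hA j i) hA)
    (mul_apply_nonneg hA hA) (transpose_mul_self_apply_pos_iff hA hpat)
  simp only [MatIrred, hpow]

theorem mul_self_diag_pos_of_matIrred (hA : ∀ i j, 0 ≤ A i j)
    (hpat : ∀ i j, 0 < A i j ↔ 0 < A j i) (hirr : MatIrred (A * A)) (i : Fin n) :
    0 < (A * A) i i := by
  obtain ⟨m, hm, hpos⟩ := hirr i i
  obtain ⟨l, hl⟩ := exists_apply_pos_of_pow_apply_pos (mul_apply_nonneg hA hA) hm hpos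
  obtain ⟨k, hk, -⟩ := (mul_apply_pos_iff hA hA i l).1 hl
  exact mul_self_apply_self_pos hA hpat hk

end FinMatrix

theorem stmt16 {n : ℕ} (A : Matrix (Fin n) (Fin n) ℝ)
    (hA : ∀ i j, 0 ≤ A i j) (hsym : ∀ i j, A i j = 0 ↔ A j i = 0) :
    (MatIrred A ∧ MatIrred (Aᵀ * A)) ↔ MatPrimitive A := by
  have hpat : ∀ i j, 0 < A i j ↔ 0 < A j i := fun i j ↦ by
    rw [(hA i j).lt_iff_ne', (hA j i).lt_iff_ne', Ne, Ne, hsym]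
  rw [matIrred_transpose_mul_self_iff hA hpat]
  constructor
  · rintro ⟨-, hirr⟩
    exact matPrimitive_mul_self_iff.1 <| matPrimitive_of_matIrred_of_diag_pos
      (mul_apply_nonneg hA hA) (mul_self_diag_pos_of_matIrred hA hpat hirr) hirr
  · intro hprim
    exact ⟨hprim.matIrred, (matPrimitive_mul_self_iff.2 hprim).matIrred⟩
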